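/- Let g = (A,v) ∈ Aff(n,ℂ) with |det A| = 1. Then g is a product of three coninvolutions in Aff(n,ℂ) if and only if g is consimilar to a product of two coninvolutions in Aff(n,ℂ). -/

import Mathlib

open Matrix
noncomputable section

/-- `Aff n` models the affine group `Aff(n, ℂ) = GL(n, ℂ) ⋉ ℂⁿ`,
with elements `g = (A, v)` acting by `x ↦ A x + v`. -/
@[ext] structure Aff (n : ℕ) where
  A : GL (Fin n) ℂ
  v : Fin n → ℂ

namespace Aff

variable {n : ℕ}

instance : Mul (Aff n) :=
  ⟨fun g h => ⟨g.A * h.A, (g.A : Matrix (Fin n) (Fin n) ℂ) *ᵥ h.v + g.v⟩⟩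

instance : One (Aff n) := ⟨⟨1, 0⟩⟩

instance : Inv (Aff n) :=
  ⟨fun g => ⟨g.A⁻¹, -((g.A⁻¹ : Matrix (Fin n) (Fin n) ℂ) *ᵥ g.v)⟩⟩

@[simp] lemma mul_A (g h : Aff n) : (g * h).A = g.A * h.A := rfl
@[simp] lemma mul_v (g h : Aff n) :
    (g * h).v = (g.A : Matrix (Fin n) (Fin n) ℂ) *ᵥ h.v + g.v := rfl
@[simp] lemma one_A : (1 : Aff n).A = 1 := rfl
@[simp] lemma one_v : (1 : Aff n).v = 0 := rfl
@[simp] lemma inv_A (g : Aff n) : (g⁻¹).A = g.A⁻¹ := rfl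
@[simp] lemma inv_v (g : Aff n) :
    (g⁻¹).v = -((g.A⁻¹ : Matrix (Fin n) (Fin n) ℂ) *ᵥ g.v) := rfl

instance : Group (Aff n) where
  mul_assoc a b c := by
    ext : 1
    · simp [mul_assoc]
    · simp [Units.val_mul, mulVec_add, mulVec_mulVec, add_assoc]
  one_mul a := by
    ext : 1 <;> simp
  mul_one a := by
    ext : 1 <;> simp
  inv_mul_cancel a := by
    ext : 1 <;> simp

/-- Entrywise complex conjugation on `GL(m, ℂ)`. -/
def glConj {m : Type*} [Fintype m] [DecidableEq m] : GL m ℂ →* GL m ℂ :=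
  Units.map ((starRingEnd ℂ).mapMatrix.toMonoidHom)

/-- The conjugate `ḡ = (Ā, v̄)` of an affine transformation `g = (A, v)`. -/
def bar (g : Aff n) : Aff n :=
  ⟨glConj g.A, star g.v⟩

/-- `h ∈ Aff(n, ℂ)` is a coninvolution if `h h̄ = e`. -/
def IsConinvolution (g : Aff n) : Prop := g * bar g = 1

/-- `g` is c-reversible if `h g h⁻¹ = ḡ⁻¹` for some `h ∈ Aff(n, ℂ)`. -/
def IsCReversible (g : Aff n) : Prop :=
  ∃ h : Aff n, h * g * h⁻¹ = (bar g)⁻¹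

/-- `g` is strongly c-reversible if `h g h⁻¹ = ḡ⁻¹` for some coninvolution `h`. -/
def IsStronglyCReversible (g : Aff n) : Prop :=
  ∃ h : Aff n, IsConinvolution h ∧ h * g * h⁻¹ = (bar g)⁻¹

end Aff

namespace Aff

variable {n : ℕ}

lemma glConj_coe {m : Type*} [Fintype m] [DecidableEq m] (A : GL m ℂ) :
    ((glConj A : GL m ℂ) : Matrix m m ℂ) = (A : Matrix m m ℂ).map (starRingEnd ℂ) := rfl

lemma star_mulVec' (M : Matrix (Fin n) (Fin n) ℂ) (v : Fin n → ℂ) :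
    star (M *ᵥ v) = (M.map (starRingEnd ℂ)) *ᵥ star v := by
  funext i
  simp [Matrix.mulVec, dotProduct, map_sum, Matrix.map_apply]

@[simp] lemma bar_A (g : Aff n) : (bar g).A = glConj g.A := rfl
@[simp] lemma bar_v (g : Aff n) : (bar g).v = star g.v := rfl

lemma bar_mul (g h : Aff n) : bar (g * h) = bar g * bar h := by
  ext : 1
  · simp [bar, _root_.map_mul]
  · simp [bar, star_add, star_mulVec', glConj_coe]

lemma bar_one : bar (1 : Aff n) = 1 := by
  ext : 1
  · simp [bar, _root_.map_one]
  · simp [bar]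

lemma bar_bar (g : Aff n) : bar (bar g) = g := by
  ext : 1
  · exact Units.ext (by simp [bar, glConj_coe]; ext i j; simp [Matrix.map_apply])
  · simp [bar]

lemma bar_inv (g : Aff n) : bar g⁻¹ = (bar g)⁻¹ := by
  have h := bar_mul g g⁻¹
  rw [mul_inv_cancel, bar_one] at h
  exact (inv_eq_of_mul_eq_one_right h.symm).symm

end Aff

namespace Aff
variable {n : ℕ}

lemma IsConinvolution.conj {a : Aff n} (ha : IsConinvolution a) (k : Aff n) :
    IsConinvolution (k * a * (bar k)⁻¹) := by
  have h2 : bar (k * a * (bar k)⁻¹) = bar k * bar a * k⁻¹ := by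
    rw [bar_mul, bar_mul, bar_inv, bar_bar]
  rw [IsConinvolution, h2]
  calc k * a * (bar k)⁻¹ * (bar k * bar a * k⁻¹)
      = k * (a * bar a) * k⁻¹ := by group
    _ = 1 := by rw [ha]; group

lemma isConinvolution_mul_bar_inv (h : Aff n) : IsConinvolution (h * (bar h)⁻¹) := by
  rw [IsConinvolution, bar_mul, bar_inv, bar_bar]
  group

end Aff


namespace Aff
variable {n : ℕ}

open Polynomial in
lemma exists_good (Cm : Matrix (Fin n) (Fin n) ℂ) :
    ∃ s : ℂ, s * (starRingEnd ℂ) s = 1 ∧ IsUnit ((1 : Matrix (Fin n) (Fin n) ℂ) + s • Cm) := by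
  classical
  set P : ℂ[X] := ((1 : Matrix (Fin n) (Fin n) ℂ[X]) + (X : ℂ[X]) • Cm.map C).det with hP
  have heval : ∀ s : ℂ, P.eval s = ((1 : Matrix (Fin n) (Fin n) ℂ) + s • Cm).det := by
    intro s
    rw [hP, ← Polynomial.coe_evalRingHom, RingHom.map_det]
    congr 1
    ext i j
    rw [RingHom.mapMatrix_apply, Matrix.map_apply]
    rw [Matrix.add_apply, Matrix.smul_apply, Matrix.map_apply, Matrix.add_apply,
      Matrix.smul_apply, smul_eq_mul, smul_eq_mul]
    simp only [Polynomial.coe_evalRingHom, _root_.map_add, _root_.map_mul,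
      Polynomial.eval_add, Polynomial.eval_mul, Polynomial.eval_X, Polynomial.eval_C,
      Matrix.one_apply, apply_ite (Polynomial.eval s), Polynomial.eval_one,
      Polynomial.eval_zero]
  have hP0 : P ≠ 0 := by
    intro h
    have h2 := heval 0
    rw [h] at h2
    simp at h2
  have hfin : {x : ℂ | P.IsRoot x}.Finite := Polynomial.finite_setOf_isRoot hP0
  have hinf : {s : ℂ | s * (starRingEnd ℂ) s = 1}.Infinite := by
    refine Set.infinite_of_injective_forall_mem
      (f := fun k : ℕ => (1 - (k : ℂ) * Complex.I) / (1 + (k : ℂ) * Complex.I)) ?_ ?_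
    · intro a b hab
      have h1 : (1 + (a : ℂ) * Complex.I) ≠ 0 := fun h => by simpa using congrArg Complex.re h
      have h2 : (1 + (b : ℂ) * Complex.I) ≠ 0 := fun h => by simpa using congrArg Complex.re h
      have h3 := (div_eq_div_iff h1 h2).mp hab
      have hab' : (a : ℂ) = b := by
        linear_combination (Complex.I / 2) * h3 + ((a : ℂ) - b) * Complex.I_sq
      exact_mod_cast hab'
    · intro k
      have h1 : (1 + (k : ℂ) * Complex.I) ≠ 0 := fun h => by simpa using congrArg Complex.re h
      have h2 : (1 - (k : ℂ) * Complex.I) ≠ 0 := fun h => by simpa using congrArg Complex.re h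
      simp only [Set.mem_setOf_eq, map_div₀, map_sub, _root_.map_add, _root_.map_mul,
        _root_.map_one, Complex.conj_I, Complex.conj_natCast]
      have h2' : (1 + (k : ℂ) * -Complex.I) ≠ 0 := fun h => by simpa using congrArg Complex.re h
      rw [div_mul_div_comm, div_eq_one_iff_eq (mul_ne_zero h1 h2')]
      ring
  obtain ⟨s, hsmem⟩ := (hinf.diff hfin).nonempty
  refine ⟨s, hsmem.1, ?_⟩
  rw [Matrix.isUnit_iff_isUnit_det, isUnit_iff_ne_zero]
  intro h0
  exact hsmem.2 (by rw [Set.mem_setOf_eq, Polynomial.IsRoot, heval]; exact h0)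

theorem exists_factor {c : Aff n} (hc : IsConinvolution c) :
    ∃ h : Aff n, c = h * (bar h)⁻¹ := by
  classical
  set Cm : Matrix (Fin n) (Fin n) ℂ := (c.A : Matrix (Fin n) (Fin n) ℂ) with hCm
  have hA : Cm * Cm.map (starRingEnd ℂ) = 1 := by
    have h1 := congrArg Aff.A hc
    simp only [mul_A, one_A, bar_A] at h1
    have h2 := congrArg (Units.val) h1
    simpa [glConj_coe] using h2
  have hv : Cm *ᵥ star c.v = -c.v := by
    have h1 := congrArg Aff.v hc
    simp only [mul_v, bar_v, one_v] at h1
    exact eq_neg_of_add_eq_zero_left h1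
  obtain ⟨s, hs1, hs2⟩ := exists_good Cm
  obtain ⟨t, ht⟩ := IsAlgClosed.exists_pow_nat_eq ((starRingEnd ℂ) s) (n := 2) (by norm_num)
  have htc : t * (starRingEnd ℂ) t = 1 := by
    have h1 : Complex.normSq s = 1 := by
      have h2 := hs1
      rw [Complex.mul_conj] at h2
      exact_mod_cast h2
    have h2 : Complex.normSq t ^ 2 = 1 := by
      have h3 : Complex.normSq (t ^ 2) = Complex.normSq ((starRingEnd ℂ) s) := by rw [ht]
      rwa [map_pow, Complex.normSq_conj, h1] at h3
    have h3 : Complex.normSq t = 1 := by nlinarith [Complex.normSq_nonneg t]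
    rw [Complex.mul_conj, h3]
    norm_num
  have ht0 : t ≠ 0 := by
    intro h
    rw [h] at htc
    simp at htc
  have hconjt2 : (starRingEnd ℂ) t ^ 2 = s := by
    have h1 := congrArg (starRingEnd ℂ) ht
    rw [map_pow] at h1
    rw [h1, Complex.conj_conj]
  set H : Matrix (Fin n) (Fin n) ℂ := t • 1 + (starRingEnd ℂ) t • Cm with hH
  have hmap : H.map (starRingEnd ℂ) = (starRingEnd ℂ) t • 1 + t • Cm.map (starRingEnd ℂ) := by
    ext i j
    by_cases hij : i = j <;>
      simp [hH, Matrix.map_apply, Matrix.add_apply, Matrix.smul_apply, Matrix.one_apply, hij]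
  have hHC : H = Cm * H.map (starRingEnd ℂ) := by
    rw [hmap, Matrix.mul_add, Matrix.mul_smul, Matrix.mul_one, Matrix.mul_smul, hA, hH]
    abel
  have hts : t * s = (starRingEnd ℂ) t := by
    rw [← hconjt2]
    linear_combination ((starRingEnd ℂ) t) * htc
  have hHunit : IsUnit H := by
    have hfac : H = t • ((1 : Matrix (Fin n) (Fin n) ℂ) + s • Cm) := by
      rw [smul_add, smul_smul, hts]
    rw [hfac, Matrix.isUnit_iff_isUnit_det, Matrix.det_smul, isUnit_iff_ne_zero]
    exact mul_ne_zero (pow_ne_zero _ ht0)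
      (isUnit_iff_ne_zero.mp ((Matrix.isUnit_iff_isUnit_det _).mp hs2))
  obtain ⟨HU, hHU⟩ := hHunit
  have hAeq : c.A = (HU : GL (Fin n) ℂ) * (glConj (HU : GL (Fin n) ℂ))⁻¹ := by
    rw [eq_mul_inv_iff_mul_eq]
    refine Units.ext ?_
    rw [Units.val_mul]
    show Cm * ((glConj (HU : GL (Fin n) ℂ) : GL (Fin n) ℂ) : Matrix (Fin n) (Fin n) ℂ) = _
    rw [glConj_coe]
    show Cm * ((HU : Matrix (Fin n) (Fin n) ℂ)).map (starRingEnd ℂ)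
        = (HU : Matrix (Fin n) (Fin n) ℂ)
    rw [hHU]
    exact hHC.symm
  have hkey : (HU : Matrix (Fin n) (Fin n) ℂ)
      * ((((glConj (HU : GL (Fin n) ℂ)) : GL (Fin n) ℂ) : Matrix (Fin n) (Fin n) ℂ))⁻¹ = Cm := by
    have h1 : ((((HU : GL (Fin n) ℂ) * (glConj (HU : GL (Fin n) ℂ))⁻¹ : GL (Fin n) ℂ))
        : Matrix (Fin n) (Fin n) ℂ) = Cm := by
      rw [← hAeq]
    rwa [Units.val_mul, Matrix.coe_units_inv] at h1
  refine ⟨⟨HU, (2⁻¹ : ℂ) • c.v⟩, ?_⟩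
  ext : 1
  · simpa using hAeq
  · simp only [mul_v, inv_v, bar_v, bar_A, inv_A, Matrix.coe_units_inv]
    have hstarw : star ((2⁻¹ : ℂ) • c.v) = (2⁻¹ : ℂ) • star c.v := by
      funext i
      simp [Pi.smul_apply]
    rw [hstarw, Matrix.mulVec_neg, Matrix.mulVec_mulVec, hkey, Matrix.mulVec_smul, hv]
    funext i
    simp [Pi.smul_apply]
    ring

end Aff

/-- if `g = (A, v) ∈ Aff(n, ℂ)` with `|det A| = 1`, then `g` is a
product of three coninvolutions iff `g` is consimilar to a product of two
coninvolutions. -/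
theorem product_of_three_coninvolutions_iff {n : ℕ} (g : Aff n)
    (hdet : ‖Matrix.det (g.A : Matrix (Fin n) (Fin n) ℂ)‖ = 1) :
    (∃ a b c : Aff n, Aff.IsConinvolution a ∧ Aff.IsConinvolution b ∧
        Aff.IsConinvolution c ∧ g = a * b * c) ↔
      ∃ k a b : Aff n, Aff.IsConinvolution a ∧ Aff.IsConinvolution b ∧
        k * g * (Aff.bar k)⁻¹ = a * b := by
  constructor
  · rintro ⟨a, b, c, ha, hb, hc, rfl⟩
    obtain ⟨h, rfl⟩ := Aff.exists_factor hc
    refine ⟨h⁻¹, h⁻¹ * a * Aff.bar h, (Aff.bar h)⁻¹ * b * h, ?_, ?_, ?_⟩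
    · have := ha.conj h⁻¹
      rwa [Aff.bar_inv, inv_inv] at this
    · have := hb.conj (Aff.bar h)⁻¹
      rwa [Aff.bar_inv, Aff.bar_bar, inv_inv] at this
    · rw [Aff.bar_inv, inv_inv]
      group
  · rintro ⟨k, a, b, ha, hb, hk⟩
    have hg : g = k⁻¹ * (a * b) * Aff.bar k := by
      rw [← hk]; group
    refine ⟨k⁻¹ * a * Aff.bar k, (Aff.bar k)⁻¹ * b * k, k⁻¹ * Aff.bar k, ?_, ?_, ?_, ?_⟩
    · have := ha.conj k⁻¹
      rwa [Aff.bar_inv, inv_inv] at this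
    · have := hb.conj (Aff.bar k)⁻¹
      rwa [Aff.bar_inv, Aff.bar_bar, inv_inv] at this
    · have := Aff.isConinvolution_mul_bar_inv k⁻¹
      rwa [Aff.bar_inv, inv_inv] at this
    · rw [hg]; group
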